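/- Let (X,d) be a compact metric space, (X, f_{1,∞}) a nonautonomous system, and K a nonempty f_{1,∞}-invariant subset. Then D(f_{1,∞},K,s) ≤ h̲_K(f_{1,∞},s) for every s > 0, where h̲ is the lower s-entropy defined via spanning sets; consequently the Pesin entropy dimension satisfies D(f_{1,∞},K) ≤ D̲_K(f_{1,∞}) ≤ D̄_K(f_{1,∞}). -/

import Mathlib

open Filter Set Topology
open scoped ENNReal NNReal

noncomputable section

/-- `comps f i n` is the composition `f_i^n = f_{i+n-1} ∘ ⋯ ∘ f_i` (indices from 1). -/
def comps {X : Type*} (f : ℕ → X → X) (i : ℕ) : ℕ → X → X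
  | 0 => id
  | n + 1 => f (i + n) ∘ comps f i n

/-- Minimal cardinality (in `ℕ∞`) of a subfamily of `U` covering `K`. -/
def coverNumOn {X : Type*} (K : Set X) (U : Set (Set X)) : ℕ∞ :=
  sInf {n : ℕ∞ | ∃ F ⊆ U, F.Finite ∧ (F.ncard : ℕ∞) = n ∧ K ⊆ ⋃₀ F}

/-- `U` is a finite open cover of the whole space. -/
def IsFiniteOpenCover {X : Type*} [TopologicalSpace X] (U : Set (Set X)) : Prop :=
  U.Finite ∧ (∀ u ∈ U, IsOpen u) ∧ ⋃₀ U = Set.univ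

/-- Dynamical join `⋁_{j=0}^{n-1} (f_i^j)⁻¹ 𝒰`. -/
def dynJoin {X : Type*} (f : ℕ → X → X) (i : ℕ) (U : Set (Set X)) (n : ℕ) : Set (Set X) :=
  {V | ∃ c : ℕ → Set X, (∀ j < n, c j ∈ U) ∧ V = ⋂ j ∈ Finset.range n, comps f i j ⁻¹' c j}

/-- Upper `s`-entropy of the system started at time `i` w.r.t. the cover `U`, on `K`. -/
def hCover {X : Type*} (f : ℕ → X → X) (i : ℕ) (K : Set X) (U : Set (Set X)) (s : ℝ) : ℝ≥0∞ :=
  Filter.limsup (fun n : ℕ =>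
    ENNReal.ofReal (Real.log ((coverNumOn K (dynJoin f i U n)).toNat)) / (n : ℝ≥0∞) ^ s)
    Filter.atTop

/-- Upper `s`-entropy: supremum over all finite open covers. -/
def hCoverSup {X : Type*} [TopologicalSpace X] (f : ℕ → X → X) (i : ℕ) (K : Set X) (s : ℝ) :
    ℝ≥0∞ :=
  ⨆ U ∈ {U : Set (Set X) | IsFiniteOpenCover U}, hCover f i K U s

/-- Upper classical topological entropy dimension (cover version), in `ℝ≥0∞`. -/
def DbarCover {X : Type*} [TopologicalSpace X] (f : ℕ → X → X) (i : ℕ) (K : Set X) : ℝ≥0∞ :=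
  sInf (ENNReal.ofReal '' {s : ℝ | 0 < s ∧ hCoverSup f i K s = 0})

section Metric
variable {X : Type*} [PseudoMetricSpace X]

/-- `E` is an `(n,ε)`-spanning set of `K`. -/
def IsSpanningSet (f : ℕ → X → X) (K : Set X) (n : ℕ) (ε : ℝ) (E : Set X) : Prop :=
  ∀ y ∈ K, ∃ x ∈ E, ∀ j < n, dist (comps f 1 j y) (comps f 1 j x) ≤ ε

/-- `F` is an `(n,ε)`-separated subset of `K`. -/
def IsSepSet (f : ℕ → X → X) (K : Set X) (n : ℕ) (ε : ℝ) (F : Set X) : Prop :=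
  F ⊆ K ∧ ∀ x ∈ F, ∀ y ∈ F, x ≠ y → ∃ j < n, ε < dist (comps f 1 j x) (comps f 1 j y)

/-- Minimal cardinality of an `(n,ε)`-spanning set of `K`. -/
def spanNum (f : ℕ → X → X) (K : Set X) (n : ℕ) (ε : ℝ) : ℕ :=
  sInf {m : ℕ | ∃ E : Set X, E.Finite ∧ E.ncard = m ∧ IsSpanningSet f K n ε E}

/-- Maximal cardinality of an `(n,ε)`-separated subset of `K`. -/
def sepNum (f : ℕ → X → X) (K : Set X) (n : ℕ) (ε : ℝ) : ℕ :=
  sSup {m : ℕ | ∃ F : Set X, F.Finite ∧ F.ncard = m ∧ IsSepSet f K n ε F}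

/-- Upper `s`-entropy via spanning sets. -/
def hSpan (f : ℕ → X → X) (K : Set X) (s : ℝ) : ℝ≥0∞ :=
  Filter.limsup (fun ε : ℝ =>
    Filter.limsup
      (fun n : ℕ => ENNReal.ofReal (Real.log (spanNum f K n ε : ℝ)) / (n : ℝ≥0∞) ^ s)
      Filter.atTop) (𝓝[>] (0 : ℝ))

/-- Upper `s`-entropy via separated sets. -/
def hSep (f : ℕ → X → X) (K : Set X) (s : ℝ) : ℝ≥0∞ :=
  Filter.limsup (fun ε : ℝ =>
    Filter.limsup
      (fun n : ℕ => ENNReal.ofReal (Real.log (sepNum f K n ε : ℝ)) / (n : ℝ≥0∞) ^ s)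
      Filter.atTop) (𝓝[>] (0 : ℝ))

/-- Lower `s`-entropy via separated sets. -/
def hSepLow (f : ℕ → X → X) (K : Set X) (s : ℝ) : ℝ≥0∞ :=
  Filter.limsup (fun ε : ℝ =>
    Filter.liminf
      (fun n : ℕ => ENNReal.ofReal (Real.log (sepNum f K n ε : ℝ)) / (n : ℝ≥0∞) ^ s)
      Filter.atTop) (𝓝[>] (0 : ℝ))

/-- Upper entropy dimension (spanning-set version). -/
def DbarSpan (f : ℕ → X → X) (K : Set X) : ℝ≥0∞ :=
  sInf (ENNReal.ofReal '' {s : ℝ | 0 < s ∧ hSpan f K s = 0})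

/-- Upper entropy dimension (separated-set version). -/
def DbarSep (f : ℕ → X → X) (K : Set X) : ℝ≥0∞ :=
  sInf (ENNReal.ofReal '' {s : ℝ | 0 < s ∧ hSep f K s = 0})

/-- Lower entropy dimension (separated-set version). -/
def DlowSep (f : ℕ → X → X) (K : Set X) : ℝ≥0∞ :=
  sInf (ENNReal.ofReal '' {s : ℝ | 0 < s ∧ hSepLow f K s = 0})

/-- Diameter of a cover. -/
def covDiam (U : Set (Set X)) : ℝ≥0∞ := ⨆ u ∈ U, EMetric.diam u

end Metric

section Pesin
variable {X : Type*}

/-- The set `X(𝐔)` determined by a string `p = (m, c)`. -/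
def stringSet (f : ℕ → X → X) (p : ℕ × (ℕ → Set X)) : Set X :=
  ⋂ j ∈ Finset.range p.1, comps f 1 j ⁻¹' p.2 j

/-- `G` is a countable collection of strings over `U` of length `≥ N` covering `K`. -/
def IsStringCover (f : ℕ → X → X) (U : Set (Set X)) (K : Set X) (N : ℕ)
    (G : Set (ℕ × (ℕ → Set X))) : Prop :=
  G.Countable ∧ (∀ p ∈ G, N ≤ p.1 ∧ ∀ j < p.1, p.2 j ∈ U) ∧ K ⊆ ⋃ p ∈ G, stringSet f p

/-- The Carathéodory–Pesin pre-measure `M(f,K,s,𝒰,α,N)`. -/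
def pesinM (f : ℕ → X → X) (K : Set X) (s : ℝ) (U : Set (Set X)) (α : ℝ) (N : ℕ) : ℝ≥0∞ :=
  sInf {t : ℝ≥0∞ | ∃ G : Set (ℕ × (ℕ → Set X)), IsStringCover f U K N G ∧
    t = ∑' p : G, ENNReal.ofReal (Real.exp (-α * (p.1.1 : ℝ) ^ s))}

/-- The Carathéodory–Pesin outer measure `m(f,K,s,𝒰,α) = lim_{N→∞} M(f,K,s,𝒰,α,N)`. -/
def pesinOuter (f : ℕ → X → X) (K : Set X) (s : ℝ) (U : Set (Set X)) (α : ℝ) : ℝ≥0∞ :=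
  ⨆ N : ℕ, pesinM f K s U α N

/-- Critical value `D(f,K,s,𝒰)` where `m(f,K,s,𝒰,·)` jumps from `∞` to `0`. -/
def pesinCrit (f : ℕ → X → X) (K : Set X) (s : ℝ) (U : Set (Set X)) : EReal :=
  sInf ((fun α : ℝ => (α : EReal)) '' {α : ℝ | pesinOuter f K s U α = 0})

/-- The Pesin `s`-topological entropy `D(f,K,s)`. -/
def pesinEnt [TopologicalSpace X] (f : ℕ → X → X) (K : Set X) (s : ℝ) : EReal :=
  ⨆ U ∈ {U : Set (Set X) | IsFiniteOpenCover U}, pesinCrit f K s U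

/-- The Pesin topological entropy dimension `D(f,K)`. -/
def pesinDim [TopologicalSpace X] (f : ℕ → X → X) (K : Set X) : ℝ≥0∞ :=
  sInf (ENNReal.ofReal '' {s : ℝ | 0 < s ∧ pesinEnt f K s = 0})

end Pesin

end

/-!
Fix a finite open cover `𝒰` with Lebesgue number `δ` and put `ε = δ / 2`. A maximal
`(n, ε)`-separated subset of `K` is `(n, ε)`-spanning, and every Bowen ball of radius `ε` around
one of its points lies in a string of length `n` over `𝒰`; hence
`M(f, K, s, 𝒰, α, n) ≤ sepNum n ε · e^{-α n^s}`. If `α` exceeds the lower entropy, then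
`sepNum n ε ≤ e^{α' n^s}` for some `α' < α` and infinitely many `n`, so these bounds tend to `0`
along a subsequence; since `M` increases with `N`, the outer measure `m(f, K, s, 𝒰, α)` vanishes,
so `D(f, K, s, 𝒰) ≤ α`. For nonempty `K` a string cover has positive weight, so `D(f, K, s) ≥ 0`,
which turns the entropy inequality into the inequality of dimensions.
-/

open Metric

lemma Real.log_natCast_le_log_natCast {m n : ℕ} (h : m ≤ n) : Real.log m ≤ Real.log n := by
  rcases m.eq_zero_or_pos with rfl | hm
  · simpa using Real.log_natCast_nonneg n
  · exact Real.log_le_log (by positivity) (by exact_mod_cast h)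

lemma natCast_lt_exp_of_ofReal_log_div_rpow_lt {m n : ℕ} (hn : 0 < n) {s a : ℝ}
    (h : ENNReal.ofReal (Real.log m) / (n : ℝ≥0∞) ^ s < ENNReal.ofReal a) :
    (m : ℝ) < Real.exp (a * (n : ℝ) ^ s) := by
  have hpow : (n : ℝ≥0∞) ^ s = ENNReal.ofReal ((n : ℝ) ^ s) := by
    rw [← ENNReal.ofReal_natCast, ENNReal.ofReal_rpow_of_pos (by exact_mod_cast hn)]
  have hpos : 0 < (n : ℝ) ^ s := Real.rpow_pos_of_pos (by exact_mod_cast hn) s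
  rw [hpow, ENNReal.div_lt_iff (Or.inl (by simpa using hpos)) (Or.inl ENNReal.ofReal_ne_top),
    ← ENNReal.ofReal_mul' hpos.le, ENNReal.ofReal_lt_ofReal_iff'] at h
  rcases m.eq_zero_or_pos with rfl | hm
  · simpa using Real.exp_pos _
  · exact (Real.log_lt_iff_lt_exp (by positivity)).mp h.1

lemma tendsto_ofReal_exp_mul_rpow_of_neg {c s : ℝ} (hc : c < 0) (hs : 0 < s) :
    Tendsto (fun n : ℕ => ENNReal.ofReal (Real.exp (c * (n : ℝ) ^ s))) atTop (𝓝 0) := by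
  have hexp : Tendsto (fun n : ℕ => Real.exp (c * (n : ℝ) ^ s)) atTop (𝓝 0) :=
    Real.tendsto_exp_atBot.comp <| Tendsto.const_mul_atTop_of_neg hc <|
      (tendsto_rpow_atTop hs).comp tendsto_natCast_atTop_atTop
  simpa using ENNReal.tendsto_ofReal hexp

lemma eq_zero_of_monotone_of_frequently_le {g b : ℕ → ℝ≥0∞} (hg : Monotone g)
    (hgb : ∃ᶠ n in atTop, g n ≤ b n) (hb : Tendsto b atTop (𝓝 0)) (N : ℕ) : g N = 0 :=
  le_zero_iff.mp <| ge_of_tendsto_of_frequently hb <|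
    ((eventually_ge_atTop N).and_frequently hgb).mono fun _ ⟨hNn, hn⟩ => (hg hNn).trans hn

section Dynamics

variable {X : Type*} [PseudoMetricSpace X] {f : ℕ → X → X} {K : Set X} {n : ℕ} {ε : ℝ}

def sepCards (f : ℕ → X → X) (K : Set X) (n : ℕ) (ε : ℝ) : Set ℕ :=
  {m : ℕ | ∃ F : Set X, F.Finite ∧ F.ncard = m ∧ IsSepSet f K n ε F}

lemma sepNum_eq_sSup_sepCards : sepNum f K n ε = sSup (sepCards f K n ε) := rfl

lemma zero_mem_sepCards : 0 ∈ sepCards f K n ε :=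
  ⟨∅, finite_empty, ncard_empty X, empty_subset K, fun x hx => absurd hx (notMem_empty x)⟩

lemma continuous_comps (hf : ∀ i, Continuous (f i)) (i n : ℕ) : Continuous (comps f i n) := by
  induction n with
  | zero => exact continuous_id
  | succ n ih => exact (hf (i + n)).comp ih

lemma hSepLow_le_hSep (f : ℕ → X → X) (K : Set X) (s : ℝ) : hSepLow f K s ≤ hSep f K s :=
  limsup_le_limsup (Eventually.of_forall fun _ => liminf_le_limsup)

variable [CompactSpace X]

lemma exists_pos_forall_dist_comps_lt (hf : ∀ i, Continuous (f i)) (n : ℕ) (hε : 0 < ε) :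
    ∃ η > 0, ∀ x y : X, dist x y < η → ∀ j < n, dist (comps f 1 j x) (comps f 1 j y) < ε := by
  have huc : UniformContinuous fun (x : X) (j : Fin n) => comps f 1 j x :=
    CompactSpace.uniformContinuous_of_continuous <| continuous_pi fun j => continuous_comps hf 1 j
  obtain ⟨η, hη, hdist⟩ := Metric.uniformContinuous_iff.mp huc ε hε
  exact ⟨η, hη, fun x y hxy j hj =>
    (dist_le_pi_dist (fun j : Fin n => comps f 1 j x) _ ⟨j, hj⟩).trans_lt (hdist hxy)⟩

lemma bddAbove_sepCards (hf : ∀ i, Continuous (f i)) (K : Set X) (n : ℕ) (hε : 0 < ε) :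
    BddAbove (sepCards f K n ε) := by
  obtain ⟨η, hη, hclose⟩ := exists_pos_forall_dist_comps_lt hf n hε
  obtain ⟨T, -, hT, hcover⟩ :=
    finite_cover_balls_of_compact (isCompact_univ (X := X)) (half_pos hη)
  choose c hcT hxc using fun x : X => mem_iUnion₂.mp (hcover (mem_univ x))
  refine ⟨T.ncard, ?_⟩
  rintro _ ⟨F, -, rfl, -, hsep⟩
  -- two points sharing a centre are `η`-close, so their orbits stay `ε`-close up to time `n`
  refine ncard_le_ncard_of_injOn c (fun x _ => hcT x) (fun x hx y hy hcxy => ?_) hT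
  by_contra hxy
  obtain ⟨j, hj, hfar⟩ := hsep x hx y hy hxy
  have hxy_close : dist x y < η := by
    have hx := hxc x
    have hy := hxc y
    rw [hcxy, mem_ball] at hx
    rw [mem_ball'] at hy
    linarith [dist_triangle x (c y) y]
  exact (hclose x y hxy_close j hj).not_gt hfar

lemma exists_isSpanningSet_ncard_eq_sepNum (hf : ∀ i, Continuous (f i)) (K : Set X) (n : ℕ)
    (hε : 0 < ε) : ∃ E : Set X, E.Finite ∧ E.ncard = sepNum f K n ε ∧ IsSpanningSet f K n ε E := by
  have hbdd := bddAbove_sepCards hf K n hε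
  obtain ⟨F, hF, hcard, hsep⟩ := Nat.sSup_mem ⟨0, zero_mem_sepCards⟩ hbdd
  refine ⟨F, hF, hcard, fun y hy => ?_⟩
  by_contra! hfar
  have hyF : y ∉ F := fun hyF => by
    obtain ⟨j, -, hj⟩ := hfar y hyF
    linarith [dist_self (comps f 1 j y), hε]
  have hsep' : IsSepSet f K n ε (insert y F) := by
    refine ⟨insert_subset hy hsep.1, ?_⟩
    rintro x (rfl | hx) z (rfl | hz) hxz
    · exact absurd rfl hxz
    · exact hfar z hz
    · obtain ⟨j, hj, hd⟩ := hfar x hx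
      exact ⟨j, hj, dist_comm (comps f 1 j x) _ ▸ hd⟩
    · exact hsep.2 x hx z hz hxz
  have hle : F.ncard + 1 ≤ sepNum f K n ε :=
    le_csSup hbdd ⟨insert y F, hF.insert y, ncard_insert_of_notMem hyF hF, hsep'⟩
  rw [sepNum_eq_sSup_sepCards, ← hcard] at hle
  omega

lemma sepNum_le_sepNum (hf : ∀ i, Continuous (f i)) (K : Set X) (n : ℕ) {ε' : ℝ}
    (hε' : 0 < ε') (h : ε' ≤ ε) : sepNum f K n ε ≤ sepNum f K n ε' := by
  refine csSup_le_csSup (bddAbove_sepCards hf K n hε') ⟨0, zero_mem_sepCards⟩ ?_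
  rintro m ⟨F, hF, hcard, hFK, hsep⟩
  refine ⟨F, hF, hcard, hFK, fun x hx y hy hxy => ?_⟩
  obtain ⟨j, hj, hd⟩ := hsep x hx y hy hxy
  exact ⟨j, hj, h.trans_lt hd⟩

lemma liminf_sepNum_le_hSepLow (hf : ∀ i, Continuous (f i)) (K : Set X) (s : ℝ) (hε : 0 < ε) :
    liminf (fun n : ℕ => ENNReal.ofReal (Real.log (sepNum f K n ε : ℝ)) / (n : ℝ≥0∞) ^ s)
      atTop ≤ hSepLow f K s := by
  refine le_limsup_of_frequently_le (Eventually.frequently ?_)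
  filter_upwards [Ioo_mem_nhdsGT hε] with ε' hε'
  refine liminf_le_liminf (Eventually.of_forall fun n => ?_)
  exact ENNReal.div_le_div_right (ENNReal.ofReal_le_ofReal <|
    Real.log_natCast_le_log_natCast (sepNum_le_sepNum hf K n hε'.1 hε'.2.le)) _

end Dynamics

section Pesin

variable {X : Type*} {f : ℕ → X → X} {K : Set X} {s α : ℝ} {U : Set (Set X)}

lemma pesinM_mono (f : ℕ → X → X) (K : Set X) (s : ℝ) (U : Set (Set X)) (α : ℝ) :
    Monotone (pesinM f K s U α) := by
  intro N N' hN
  refine sInf_le_sInf ?_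
  rintro t ⟨G, ⟨hG, hlen, hcover⟩, rfl⟩
  exact ⟨G, ⟨hG, fun p hp => ⟨hN.trans (hlen p hp).1, (hlen p hp).2⟩, hcover⟩, rfl⟩

lemma one_le_pesinM (hK : K.Nonempty) (hα : α ≤ 0) (N : ℕ) : 1 ≤ pesinM f K s U α N := by
  refine le_sInf ?_
  rintro t ⟨G, ⟨-, -, hcover⟩, rfl⟩
  obtain ⟨p, hp, -⟩ := mem_iUnion₂.mp (hcover hK.some_mem)
  refine le_trans ?_ (ENNReal.le_tsum (⟨p, hp⟩ : G))
  rw [ENNReal.one_le_ofReal]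
  exact Real.one_le_exp (mul_nonneg (neg_nonneg.mpr hα) (Real.rpow_nonneg (Nat.cast_nonneg _) s))

lemma pesinCrit_nonneg (hK : K.Nonempty) : 0 ≤ pesinCrit f K s U := by
  refine le_sInf ?_
  rintro _ ⟨α, hα, rfl⟩
  refine EReal.coe_nonneg.mpr (le_of_not_ge fun hα0 => ?_)
  have h1 := (one_le_pesinM (s := s) (U := U) hK hα0 0).trans (le_iSup (pesinM f K s U α) 0)
  rw [← pesinOuter, hα] at h1
  exact absurd h1 (by norm_num)

lemma pesinEnt_nonneg [TopologicalSpace X] (hK : K.Nonempty) : 0 ≤ pesinEnt f K s :=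
  (pesinCrit_nonneg hK).trans <| le_iSup₂_of_le {univ}
    ⟨finite_singleton _, by simp, sUnion_singleton _⟩ le_rfl

lemma pesinM_le_ncard_mul [PseudoMetricSpace X] {δ ε : ℝ} (hεδ : ε < δ)
    (hLeb : ∀ x : X, ∃ u ∈ U, ball x δ ⊆ u) {n : ℕ} {E : Set X} (hE : E.Finite)
    (hspan : IsSpanningSet f K n ε E) :
    pesinM f K s U α n ≤ E.ncard * ENNReal.ofReal (Real.exp (-α * (n : ℝ) ^ s)) := by
  choose u hu hball using hLeb
  set string : X → ℕ × (ℕ → Set X) := fun x => (n, fun j => u (comps f 1 j x))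
  have hcover : IsStringCover f U K n (string '' E) := by
    refine ⟨(hE.image string).countable, ?_, fun y hy => ?_⟩
    · rintro _ ⟨x, -, rfl⟩
      exact ⟨le_rfl, fun j _ => hu _⟩
    · obtain ⟨x, hx, hclose⟩ := hspan y hy
      refine mem_iUnion₂.mpr ⟨string x, mem_image_of_mem string hx, mem_iInter₂.mpr fun j hj => ?_⟩
      exact hball _ (mem_ball.mpr ((hclose j (Finset.mem_range.mp hj)).trans_lt hεδ))
  calc pesinM f K s U α n
      ≤ ∑' _ : string '' E, ENNReal.ofReal (Real.exp (-α * (n : ℝ) ^ s)) :=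
        sInf_le ⟨string '' E, hcover, tsum_congr <| by rintro ⟨_, x, -, rfl⟩; rfl⟩
    _ ≤ E.ncard * ENNReal.ofReal (Real.exp (-α * (n : ℝ) ^ s)) := by
        have hcard : ENat.card (string '' E) ≤ E.ncard :=
          hE.cast_ncard_eq ▸ encard_image_le string E
        rw [ENNReal.tsum_const]
        gcongr
        exact_mod_cast hcard

end Pesin

section Compact

variable {X : Type*} [PseudoMetricSpace X] [CompactSpace X] {f : ℕ → X → X} {K : Set X}
  {s α : ℝ} {U : Set (Set X)}

lemma pesinOuter_eq_zero_of_hSepLow_lt (hf : ∀ i, Continuous (f i)) (hs : 0 < s)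
    (hU : IsFiniteOpenCover U) (hα : hSepLow f K s < ENNReal.ofReal α) :
    pesinOuter f K s U α = 0 := by
  obtain ⟨-, hUopen, hUcover⟩ := hU
  obtain ⟨δ, hδ, hLeb⟩ :=
    lebesgue_number_lemma_of_metric_sUnion (isCompact_univ (X := X)) hUopen hUcover.symm.subset
  obtain ⟨β, hβ, hβα⟩ := exists_between hα
  set α' := β.toReal
  have hα' : α' < α := ENNReal.toReal_lt_of_lt_ofReal hβα
  have hliminf := (liminf_sepNum_le_hSepLow hf K s (half_pos hδ)).trans_lt
    (hβ.trans_eq (ENNReal.ofReal_toReal hβα.ne_top).symm)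
  have hsmall : ∃ᶠ n in atTop, (sepNum f K n (δ / 2) : ℝ) < Real.exp (α' * (n : ℝ) ^ s) :=
    ((eventually_gt_atTop 0).and_frequently (frequently_lt_of_liminf_lt (h := hliminf))).mono
      fun n ⟨hn, hlt⟩ => natCast_lt_exp_of_ofReal_log_div_rpow_lt hn hlt
  refine ENNReal.iSup_eq_zero.mpr <| eq_zero_of_monotone_of_frequently_le
    (pesinM_mono f K s U α) (hsmall.mono fun n hn => ?_)
    (tendsto_ofReal_exp_mul_rpow_of_neg (sub_neg.mpr hα') hs)
  obtain ⟨E, hE, hcard, hspan⟩ := exists_isSpanningSet_ncard_eq_sepNum hf K n (half_pos hδ)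
  calc pesinM f K s U α n
      ≤ E.ncard * ENNReal.ofReal (Real.exp (-α * (n : ℝ) ^ s)) :=
        pesinM_le_ncard_mul (half_lt_self hδ) (fun x => hLeb x (mem_univ x)) hE hspan
    _ ≤ ENNReal.ofReal (Real.exp (α' * (n : ℝ) ^ s)) *
          ENNReal.ofReal (Real.exp (-α * (n : ℝ) ^ s)) := by
        rw [hcard, ← ENNReal.ofReal_natCast]
        gcongr
    _ = ENNReal.ofReal (Real.exp ((α' - α) * (n : ℝ) ^ s)) := by
        rw [← ENNReal.ofReal_mul (Real.exp_nonneg _), ← Real.exp_add, sub_mul, sub_eq_add_neg,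
          neg_mul]

lemma pesinCrit_le_hSepLow (hf : ∀ i, Continuous (f i)) (hs : 0 < s) (hU : IsFiniteOpenCover U) :
    pesinCrit f K s U ≤ hSepLow f K s := by
  refine le_of_forall_gt_imp_ge_of_dense fun b hb => ?_
  obtain ⟨α, hα, hαb⟩ := EReal.exists_between_coe_real hb
  have hα' : hSepLow f K s < ENNReal.ofReal α := by
    rw [← EReal.coe_ennreal_lt_coe_ennreal_iff, EReal.coe_ennreal_ofReal]
    exact hα.trans_le (EReal.coe_le_coe_iff.mpr (le_max_left α 0))
  calc pesinCrit f K s U ≤ α :=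
        sInf_le <| mem_image_of_mem _ (show α ∈ {α : ℝ | pesinOuter f K s U α = 0} from
          pesinOuter_eq_zero_of_hSepLow_lt hf hs hU hα')
    _ ≤ b := hαb.le

end Compact

theorem pesin_le_lower_general {X : Type*} [MetricSpace X] [CompactSpace X] (f : ℕ → X → X)
    (hf : ∀ i, Continuous (f i)) (K : Set X) (hK : K.Nonempty) :
    (∀ s : ℝ, 0 < s → pesinEnt f K s ≤ ((hSepLow f K s : ℝ≥0∞) : EReal)) ∧
      pesinDim f K ≤ DlowSep f K ∧ DlowSep f K ≤ DbarSep f K := by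
  have hent : ∀ s : ℝ, 0 < s → pesinEnt f K s ≤ ((hSepLow f K s : ℝ≥0∞) : EReal) :=
    fun s hs => iSup₂_le fun U hU => pesinCrit_le_hSepLow hf hs hU
  refine ⟨hent, sInf_le_sInf (image_mono ?_), sInf_le_sInf (image_mono ?_)⟩
  · rintro s ⟨hs, hzero⟩
    refine ⟨hs, le_antisymm ?_ (pesinEnt_nonneg hK)⟩
    simpa [hzero] using hent s hs
  · rintro s ⟨hs, hzero⟩
    exact ⟨hs, le_zero_iff.mp (hzero ▸ hSepLow_le_hSep f K s)⟩

/-- Pesin entropy is bounded by the lower classical `s`-entropy; hence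
`D(f,K) ≤ D̲_K(f) ≤ D̄_K(f)` for invariant `K`. -/
theorem pesin_le_lower {X : Type*} [MetricSpace X] [CompactSpace X] (f : ℕ → X → X)
    (hf : ∀ i, Continuous (f i)) (K : Set X) (hK : K.Nonempty)
    (hinv : ∀ i, 1 ≤ i → f i ⁻¹' K = K) :
    (∀ s : ℝ, 0 < s → pesinEnt f K s ≤ ((hSepLow f K s : ℝ≥0∞) : EReal)) ∧
      pesinDim f K ≤ DlowSep f K ∧ DlowSep f K ≤ DbarSep f K :=
  pesin_le_lower_general f hf K hK
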